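/- Let ℓ be an odd prime and let G be a subgroup of N_ns not contained in C_ns, such that every element of G is either a scalar matrix or has irreducible characteristic polynomial over F_ℓ. Then: (a) every element of G ∩ C_ns has determinant a square in F_ℓˣ; and (b) if the determinant map G → F_ℓˣ is surjective, then ℓ ≡ 1 (mod 4). -/

import Mathlib

open Matrix

abbrev GL2 (ℓ : ℕ) : Type := GL (Fin 2) (ZMod ℓ)

/-- The underlying matrix of an element of `GL₂(F_ℓ)`. -/
def mat {ℓ : ℕ} (g : GL2 ℓ) : Matrix (Fin 2) (Fin 2) (ZMod ℓ) := g

/-- `g` is a diagonal matrix. -/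
def IsDiag {ℓ : ℕ} (g : GL2 ℓ) : Prop := mat g 0 1 = 0 ∧ mat g 1 0 = 0

/-- `g` is an antidiagonal matrix. -/
def IsAnti {ℓ : ℕ} (g : GL2 ℓ) : Prop := mat g 0 0 = 0 ∧ mat g 1 1 = 0

/-- `g` is a scalar matrix. -/
def IsScalar {ℓ : ℕ} (g : GL2 ℓ) : Prop :=
  ∃ c : ZMod ℓ, mat g = c • (1 : Matrix (Fin 2) (Fin 2) (ZMod ℓ))

/-- Membership in the split Cartan subgroup `C_sp` (the diagonal matrices). -/
def InCsp {ℓ : ℕ} (g : GL2 ℓ) : Prop := IsDiag g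

/-- Membership in the normalizer `N_sp` of the split Cartan (diagonal or antidiagonal). -/
def InNsp {ℓ : ℕ} (g : GL2 ℓ) : Prop := IsDiag g ∨ IsAnti g

/-- Membership in the nonsplit Cartan `C_ns` w.r.t. the nonresidue `δ`:
matrices of the form `[[a, δb], [b, a]]`. -/
def InCns {ℓ : ℕ} (δ : ZMod ℓ) (g : GL2 ℓ) : Prop :=
  mat g 1 1 = mat g 0 0 ∧ mat g 0 1 = δ * mat g 1 0

/-- Membership in `N_ns \ C_ns` (as a matrix shape): `[[a, -δb], [b, -a]]`. -/
def InNnsAnti {ℓ : ℕ} (δ : ZMod ℓ) (g : GL2 ℓ) : Prop :=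
  mat g 1 1 = - mat g 0 0 ∧ mat g 0 1 = - (δ * mat g 1 0)

/-- Membership in the normalizer `N_ns` of the nonsplit Cartan. -/
def InNns {ℓ : ℕ} (δ : ZMod ℓ) (g : GL2 ℓ) : Prop := InCns δ g ∨ InNnsAnti δ g

/-- `PGL₂(F_ℓ)`: the quotient of `GL₂(F_ℓ)` by its center (the scalar matrices). -/
abbrev PGL2 (ℓ : ℕ) : Type := GL2 ℓ ⧸ Subgroup.center (GL2 ℓ)

/-- The natural projection `GL₂(F_ℓ) →* PGL₂(F_ℓ)`. -/
def toPGL (ℓ : ℕ) : GL2 ℓ →* PGL2 ℓ := QuotientGroup.mk' _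

/-- The image of a subgroup of `GL₂(F_ℓ)` in `PGL₂(F_ℓ)`. -/
def projImage {ℓ : ℕ} (G : Subgroup (GL2 ℓ)) : Subgroup (PGL2 ℓ) := G.map (toPGL ℓ)

/-- `H` is isomorphic to the alternating group `A₄`. -/
def IsA4 {ℓ : ℕ} (H : Subgroup (PGL2 ℓ)) : Prop := Nonempty (H ≃* alternatingGroup (Fin 4))

/-- `H` is isomorphic to the symmetric group `S₄`. -/
def IsS4 {ℓ : ℕ} (H : Subgroup (PGL2 ℓ)) : Prop := Nonempty (H ≃* Equiv.Perm (Fin 4))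

/-- `H` is isomorphic to the alternating group `A₅`. -/
def IsA5 {ℓ : ℕ} (H : Subgroup (PGL2 ℓ)) : Prop := Nonempty (H ≃* alternatingGroup (Fin 5))

/-! An element of `N_ns \ C_ns` has trace zero, so its characteristic polynomial is `X² + det`.
It is not scalar since `ℓ` is odd, so by hypothesis this polynomial is irreducible and `-det` is a
nonsquare. Fixing such an `h ∈ G`, every `g ∈ G ∩ C_ns` makes `h * g` another one, so `-det h` and
`-det h · det g` are both nonsquares and `det g` is a square. If `det` is onto, some `g ∈ G` has
`det g = -1`; as `-det g = 1` is a square, `g ∈ C_ns`, so `-1` is a square and `ℓ ≡ 1 (mod 4)`. -/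

open Polynomial

theorem FiniteField.isSquare_mul_of_not_isSquare {F : Type*} [Field F] [Fintype F] {a b : F}
    (ha : ¬IsSquare a) (hb : ¬IsSquare b) : IsSquare (a * b) := by
  classical
  have hab : a * b ≠ 0 := mul_ne_zero (fun h => ha (h ▸ .zero)) (fun h => hb (h ▸ .zero))
  rw [← quadraticChar_one_iff_isSquare hab, map_mul, quadraticChar_neg_one_iff_not_isSquare.2 ha,
    quadraticChar_neg_one_iff_not_isSquare.2 hb]
  norm_num

theorem Matrix.not_isSquare_neg_det_of_trace_eq_zero {K : Type*} [Field K]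
    {M : Matrix (Fin 2) (Fin 2) K} (htr : M.trace = 0) (hirr : Irreducible M.charpoly) :
    ¬IsSquare (-M.det) := by
  rintro ⟨s, hs⟩
  have hroot : M.charpoly.IsRoot s := by
    simp only [IsRoot, charpoly_fin_two, htr, eval_add, eval_sub, eval_mul, eval_pow, eval_X,
      eval_C]
    linear_combination -hs
  have hdeg : M.charpoly.natDegree = 1 :=
    natDegree_eq_of_degree_eq_some (degree_eq_one_of_irreducible_of_root hirr hroot)
  simp [charpoly_natDegree_eq_dim] at hdeg

lemma mat_mul {ℓ : ℕ} (g h : GL2 ℓ) : mat (g * h) = mat g * mat h := rfl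

namespace InNnsAnti

variable {ℓ : ℕ} {δ : ZMod ℓ} {g : GL2 ℓ}

lemma trace_eq_zero (hg : InNnsAnti δ g) : (mat g).trace = 0 := by
  rw [trace_fin_two, hg.1, add_neg_cancel]

lemma mul_inCns {h : GL2 ℓ} (hg : InNnsAnti δ g) (hh : InCns δ h) : InNnsAnti δ (g * h) := by
  obtain ⟨g11, g01⟩ := hg
  obtain ⟨h11, h01⟩ := hh
  simp only [InNnsAnti, mat_mul, mul_apply, Fin.sum_univ_two]
  constructor
  · linear_combination mat g 1 0 * h01 + mat g 1 1 * h11 + mat h 0 0 * g11 + mat h 1 0 * g01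
  · linear_combination mat g 0 0 * h01 + mat g 0 1 * h11 + δ * mat h 1 0 * g11 + mat h 0 0 * g01

variable [Fact ℓ.Prime]

lemma not_isScalar (hℓ : ℓ ≠ 2) (hg : InNnsAnti δ g) : ¬IsScalar g := by
  rintro ⟨c, hc⟩
  have h2c : 2 * c = 0 := by
    have := hg.1
    simp only [hc, Matrix.smul_apply, one_apply_eq] at this
    linear_combination this
  have hc0 : c = 0 :=
    (mul_eq_zero.1 h2c).resolve_left (Ring.two_ne_zero (by rwa [ZMod.ringChar_zmod_n]))
  rw [hc0, zero_smul] at hc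
  exact g.ne_zero hc

lemma not_isSquare_neg_det (hℓ : ℓ ≠ 2) (hg : InNnsAnti δ g)
    (hloc : IsScalar g ∨ Irreducible (mat g).charpoly) : ¬IsSquare (-(mat g).det) :=
  Matrix.not_isSquare_neg_det_of_trace_eq_zero hg.trace_eq_zero
    (hloc.resolve_left (hg.not_isScalar hℓ))

end InNnsAnti

theorem Nns_local_condition_det_general
    {ℓ : ℕ} [Fact ℓ.Prime] (hℓ : ℓ ≠ 2) (δ : ZMod ℓ)
    (G : Subgroup (GL2 ℓ)) (hG : ∀ g ∈ G, InNns δ g) (hnc : ∃ g ∈ G, ¬ InCns δ g)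
    (hloc : ∀ g ∈ G, IsScalar g ∨ Irreducible (Matrix.charpoly (mat g))) :
    (∀ g ∈ G, InCns δ g → IsSquare ((mat g).det)) ∧
    ((∀ u : (ZMod ℓ)ˣ, ∃ g ∈ G, Matrix.GeneralLinearGroup.det g = u) → ℓ % 4 = 1) := by
  have not_isSquare_neg_det : ∀ g ∈ G, InNnsAnti δ g → ¬IsSquare (-(mat g).det) :=
    fun g hg hA => hA.not_isSquare_neg_det hℓ (hloc g hg)
  obtain ⟨h, hG_h, hA_h⟩ := hnc
  replace hA_h : InNnsAnti δ h := (hG h hG_h).resolve_left hA_h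
  have square_det : ∀ g ∈ G, InCns δ g → IsSquare (mat g).det := by
    intro g hg hC
    by_contra hsq
    apply not_isSquare_neg_det _ (mul_mem hG_h hg) (hA_h.mul_inCns hC)
    rw [mat_mul, det_mul, ← neg_mul]
    exact FiniteField.isSquare_mul_of_not_isSquare (not_isSquare_neg_det h hG_h hA_h) hsq
  refine ⟨square_det, fun hsurj => ?_⟩
  obtain ⟨g, hg, hdet⟩ := hsurj (-1)
  replace hdet : (mat g).det = -1 := congrArg Units.val hdet
  have hneg_one : IsSquare (-1 : ZMod ℓ) := by
    rcases hG g hg with hC | hA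
    · exact hdet ▸ square_det g hg hC
    · exact (not_isSquare_neg_det g hg hA (by rw [hdet, neg_neg]; exact .one)).elim
  have := ZMod.exists_sq_eq_neg_one_iff.1 hneg_one
  have := (Fact.out : ℓ.Prime).eq_two_or_odd.resolve_left hℓ
  omega

/-- Let `G ≤ N_ns` be not contained in `C_ns`, with every element scalar or
of irreducible characteristic polynomial. Then (a) every element of `G ∩ C_ns` has square
determinant, and (b) if the determinant map `G → F_ℓˣ` is surjective then `ℓ ≡ 1 (mod 4)`. -/
theorem Nns_local_condition_det
    {ℓ : ℕ} [Fact ℓ.Prime] (hℓ : ℓ ≠ 2) (δ : ZMod ℓ) (hδ : ¬ IsSquare δ)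
    (G : Subgroup (GL2 ℓ)) (hG : ∀ g ∈ G, InNns δ g) (hnc : ∃ g ∈ G, ¬ InCns δ g)
    (hloc : ∀ g ∈ G, IsScalar g ∨ Irreducible (Matrix.charpoly (mat g))) :
    (∀ g ∈ G, InCns δ g → IsSquare ((mat g).det)) ∧
    ((∀ u : (ZMod ℓ)ˣ, ∃ g ∈ G, Matrix.GeneralLinearGroup.det g = u) → ℓ % 4 = 1) :=
  Nns_local_condition_det_general hℓ δ G hG hnc hloc
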